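/- Fix an integer g ≥ 2. Consider all triples of integers 0 < u₁ < u₂ < u₃ < 5, and set u₀ = 0. Then the sum over all such triples of (4·5³ / ∏_{0≤i<j≤3} f₅(u_j − u_i))^{g−1} equals 2^{2g}, where f_k(r) = 4·sin²(rπ/k). -/

import Mathlib

/-!
The four triples are exactly the 4-element subsets `{0, u₁, u₂, u₃}` of `ℤ/5` containing `0`.
In each of them the six differences are `±1` three times and `±2` three times modulo `5`, and
`f₅` only sees `r` up to `r ↦ 5 - r`, so every product of the `f₅(u_j - u_i)` equals
`(f₅(1) f₅(2))³ = 5³`, using `cos (π/5) = (1 + √5)/4` to get `f₅(1) f₅(2) = 5`.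
Hence every summand is `4^{g-1}` and the sum is `4 · 4^{g-1} = 2^{2g}`.
-/

/-- The function `f_k(r) = 4 sin²(rπ/k)`. -/
noncomputable def f (k : ℕ) (r : ℝ) : ℝ := 4 * Real.sin (r * Real.pi / k) ^ 2

open Real Finset

theorem f_eq_two_sub_two_mul_cos (k : ℕ) (r : ℝ) : f k r = 2 - 2 * cos (2 * r * π / k) := by
  rw [f, sin_sq_eq_half_sub]
  ring_nf

theorem f_natCast_sub (k : ℕ) (r : ℝ) : f k (k - r) = f k r := by
  rcases eq_or_ne k 0 with rfl | hk
  · simp [f]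
  have : ((k : ℝ) - r) * π / k = π - r * π / k := by field_simp
  rw [f, f, this, sin_pi_sub]

theorem f_five_one : f 5 1 = (5 - √5) / 2 := by
  have : cos (2 * π / 5) = (√5 - 1) / 4 := by
    rw [mul_div_assoc, cos_two_mul, cos_pi_div_five]
    linear_combination (1 / 8 : ℝ) * sq_sqrt (show (0 : ℝ) ≤ 5 by norm_num)
  rw [f_eq_two_sub_two_mul_cos]
  push_cast
  rw [mul_one, this]
  ring

theorem f_five_two : f 5 2 = (5 + √5) / 2 := by
  have : cos (2 * 2 * π / 5) = - ((1 + √5) / 4) := by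
    rw [← cos_pi_div_five, ← cos_pi_sub]
    ring_nf
  rw [f_eq_two_sub_two_mul_cos]
  push_cast
  rw [this]
  ring

theorem f_five_one_mul_f_five_two : f 5 1 * f 5 2 = 5 := by
  rw [f_five_one, f_five_two]
  linear_combination (-1 / 4 : ℝ) * sq_sqrt (show (0 : ℝ) ≤ 5 by norm_num)

theorem prod_offDiag_fin_four {M : Type*} [CommMonoid M] (F : Fin 4 → Fin 4 → M) :
    ∏ i : Fin 4, ∏ j ∈ univ.filter (fun j => i < j), F i j =
      F 0 1 * F 0 2 * F 0 3 * F 1 2 * F 1 3 * F 2 3 := by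
  simp only [prod_filter, Fin.prod_univ_four]
  simp
  ac_rfl

theorem f_five_three : f 5 3 = f 5 2 := by
  convert f_natCast_sub 5 2 using 2; norm_num

theorem f_five_four : f 5 4 = f 5 1 := by
  convert f_natCast_sub 5 1 using 2; norm_num

theorem strictMono_bounded_triples_iff {u : Fin 3 → ℤ} :
    StrictMono u ∧ 0 < u 0 ∧ u 2 < 5 ↔
      u ∈ ({![1, 2, 3], ![1, 2, 4], ![1, 3, 4], ![2, 3, 4]} : Finset (Fin 3 → ℤ)) := by
  simp only [mem_insert, mem_singleton, Fin.strictMono_iff_lt_succ]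
  constructor
  · rintro ⟨hmono, h0, h2⟩
    have h01 : u 0 < u 1 := hmono 0
    have h12 : u 1 < u 2 := hmono 1
    have hu : u = ![u 0, u 1, u 2] := by funext i; fin_cases i <;> rfl
    rw [hu]
    obtain ⟨hu0, hu1, hu2⟩ : u 0 ≤ 2 ∧ u 1 ≤ 3 ∧ 3 ≤ u 2 := by omega
    interval_cases u 0 <;> interval_cases u 1 <;> interval_cases u 2 <;> simp_all
  · rintro (rfl | rfl | rfl | rfl) <;> decide

theorem prod_f_five_of_mem {u : Fin 3 → ℤ}
    (hu : u ∈ ({![1, 2, 3], ![1, 2, 4], ![1, 3, 4], ![2, 3, 4]} : Finset (Fin 3 → ℤ))) :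
    ∏ i : Fin 4, ∏ j ∈ univ.filter (fun j => i < j),
      f 5 (((Fin.cons 0 u : Fin 4 → ℤ) j : ℝ) - ((Fin.cons 0 u : Fin 4 → ℤ) i : ℝ)) = 125 := by
  have : (f 5 1 * f 5 2) ^ 3 = 125 := by rw [f_five_one_mul_f_five_two]; norm_num
  rw [prod_offDiag_fin_four, ← this]
  simp only [mem_insert, mem_singleton] at hu
  rcases hu with rfl | rfl | rfl | rfl <;> simp <;> norm_num [f_five_three, f_five_four] <;> ring

/-- For `g ≥ 2`, the sum over all triples of integers `0 < u₁ < u₂ < u₃ < 5`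
(with `u₀ = 0`) of `(4·5³ / ∏_{0 ≤ i < j ≤ 3} f₅(u_j - u_i))^{g-1}` equals `2^{2g}`.
(This is the level-1 Verlinde number `N₁(SL₄)`.) -/
theorem verlinde_N1_SL4 (g : ℕ) (hg : 2 ≤ g) :
    ∑ᶠ (u : {u : Fin 3 → ℤ // StrictMono u ∧ 0 < u 0 ∧ u 2 < 5}),
      (4 * (5 : ℝ) ^ 3 /
        ∏ i : Fin 4, ∏ j ∈ Finset.univ.filter (fun j => i < j),
          f 5 (((Fin.cons 0 u.1 : Fin 4 → ℤ) j : ℝ) - ((Fin.cons 0 u.1 : Fin 4 → ℤ) i : ℝ)))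
      ^ (g - 1)
    = 2 ^ (2 * g) := by
  conv_lhs => arg 1; ext u; rw [prod_f_five_of_mem (strictMono_bounded_triples_iff.1 u.2)]
  rw [finsum_subtype_eq_finsum_cond (f := fun _ => _),
    finsum_cond_eq_sum_of_cond_iff _ fun _ => strictMono_bounded_triples_iff, sum_const]
  obtain ⟨n, rfl⟩ : ∃ n, g = n + 1 := ⟨g - 1, by omega⟩
  norm_num [pow_mul, pow_succ']
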